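/- arXiv:1412.2691 — 2 statements merged into one kernel-verified Lean document; each statement's English description precedes it below -/
import Mathlib

section
/- Let n ≥ 1 and let (Aᵢ, Bᵢ, Cᵢ), i = 1, …, n, be triples of points of ℝ³. Then the quantity ∑_{i=1}^{n} det[Aᵢ − P, Bᵢ − P, Cᵢ − P] is independent of the point P ∈ ℝ³ (i.e., takes the same value for all P) if and only if ∑_{i=1}^{n} (Bᵢ − Aᵢ) ×ᵥ (Cᵢ − Aᵢ) = 0. (The converse noted by Peano: the closedness condition ω₃(∑ᵢ AᵢBᵢCᵢ) = 0 holds if and only if the sum of oriented volumes of the tetrahedra P Aᵢ Bᵢ Cᵢ does not depend on P.) -/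
/-!
Translating the apex of a tetrahedron changes its oriented volume by a linear term:
`det[A − P, B − P, C − P] = det[A, B, C] − P ⬝ (B − A) × (C − A)`. Summing, the total is
`const − P ⬝ N` with `N = ∑ᵢ (Bᵢ − Aᵢ) × (Cᵢ − Aᵢ)`, and this is independent of `P` exactly when
`N ⬝ N = 0`, i.e. `N = 0` (compare the values at `P = N` and `P = 0`).
-/

open Matrix

noncomputable def det3 (u v w : Fin 3 → ℝ) : ℝ := ((Matrix.of ![u, v, w])ᵀ).det

theorem det3_sub_sub_sub (a b c p : Fin 3 → ℝ) :
    det3 (a - p) (b - p) (c - p) = det3 a b c - p ⬝ᵥ (b - a) ⨯₃ (c - a) := by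
  simp only [det3, det_transpose, det_fin_three, crossProduct, dotProduct, Fin.sum_univ_three,
    of_apply, LinearMap.mk₂_apply, Pi.sub_apply, cons_val_zero, cons_val_one, cons_val_two,
    vecHead, vecTail, Function.comp_apply, Fin.succ_zero_eq_one]
  ring

theorem sum_det3_sub_sub_sub {ι : Type*} (s : Finset ι) (A B C : ι → Fin 3 → ℝ)
    (p : Fin 3 → ℝ) :
    ∑ i ∈ s, det3 (A i - p) (B i - p) (C i - p) =
      ∑ i ∈ s, det3 (A i) (B i) (C i) - p ⬝ᵥ ∑ i ∈ s, (B i - A i) ⨯₃ (C i - A i) := by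
  simp only [det3_sub_sub_sub, Finset.sum_sub_distrib, dotProduct_sum]

theorem forall_dotProduct_eq_iff_eq_zero {m R : Type*} [Fintype m] [Ring R] [LinearOrder R]
    [IsStrictOrderedRing R] (v : m → R) :
    (∀ p q : m → R, p ⬝ᵥ v = q ⬝ᵥ v) ↔ v = 0 := by
  refine ⟨fun h => dotProduct_self_eq_zero.mp ?_, fun hv p q => by simp [hv]⟩
  simpa using h v 0

theorem peano_volume_independent_iff_closed_general
    (n : ℕ) (A B C : ℕ → Fin 3 → ℝ) :
    (∀ P Q : Fin 3 → ℝ,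
        ∑ i ∈ Finset.Icc 1 n, det3 (A i - P) (B i - P) (C i - P) =
          ∑ i ∈ Finset.Icc 1 n, det3 (A i - Q) (B i - Q) (C i - Q)) ↔
      ∑ i ∈ Finset.Icc 1 n, (B i - A i) ⨯₃ (C i - A i) = 0 := by
  simp only [sum_det3_sub_sub_sub, sub_right_inj]
  exact forall_dotProduct_eq_iff_eq_zero _

/-- The converse noted by Peano: the sum of oriented volumes
`∑ᵢ det[Aᵢ − P, Bᵢ − P, Cᵢ − P]` is independent of `P` if and only if the
closedness condition `∑ᵢ (Bᵢ − Aᵢ) ×ᵥ (Cᵢ − Aᵢ) = 0` holds. -/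
theorem peano_volume_independent_iff_closed
    (n : ℕ) (hn : 1 ≤ n) (A B C : ℕ → Fin 3 → ℝ) :
    (∀ P Q : Fin 3 → ℝ,
        ∑ i ∈ Finset.Icc 1 n, det3 (A i - P) (B i - P) (C i - P) =
          ∑ i ∈ Finset.Icc 1 n, det3 (A i - Q) (B i - Q) (C i - Q)) ↔
      ∑ i ∈ Finset.Icc 1 n, (B i - A i) ⨯₃ (C i - A i) = 0 :=
  peano_volume_independent_iff_closed_general n A B C
end

section
/- Let a < b and let γ : [a, b] → ℝ³ be a continuously differentiable closed curve (γ(a) = γ(b)), let O ∈ ℝ³, and set N := (1/2)∫ₐᵇ (γ(t) − O) ×ᵥ γ′(t) dt. Then for every pair of orthonormal vectors u, v ∈ ℝ³ the absolute value of the signed area of the orthogonal projection of γ on the plane spanned by u and v, namely |(1/2)∫ₐᵇ (⟨γ(t) − O, u⟩⟨γ′(t), v⟩ − ⟨γ(t) − O, v⟩⟨γ′(t), u⟩) dt|, is at most ‖N‖; moreover, there exists an orthonormal pair u, v for which this signed area equals ‖N‖. Hence the maximum over all planes of the (absolute) projected area equals the magnitude of the bi-vector associated to γ, attained when the projection plane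 has the orientation of the bi-vector. (Peano, 1890.) -/
/-!
By the Binet–Cauchy identity the integrand `⟪γ - O, u⟫⟪γ', v⟫ - ⟪γ - O, v⟫⟪γ', u⟫` equals
`⟪(γ - O) ×ᵥ γ', u ×ᵥ v⟫`, so the signed projected area is `⟪N, u ×ᵥ v⟫`. For orthonormal `u`, `v`
the vector `u ×ᵥ v` is a unit vector, which gives the bound by Cauchy–Schwarz. Conversely every
unit vector `w`, in particular the direction of `N`, is `u ×ᵥ v` for a unit `u ⊥ w` and `v = w ×ᵥ u`.
-/

open Matrix
open scoped RealInnerProductSpace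

/-- The cross product on Euclidean 3-space. -/
noncomputable def cross3 (u v : EuclideanSpace ℝ (Fin 3)) : EuclideanSpace ℝ (Fin 3) :=
  (WithLp.equiv 2 (Fin 3 → ℝ)).symm
    (crossProduct ((WithLp.equiv 2 (Fin 3 → ℝ)) u) ((WithLp.equiv 2 (Fin 3 → ℝ)) v))

open Module Set WithLp

section InnerProductSpace

variable {E : Type*} [NormedAddCommGroup E] [InnerProductSpace ℝ E]

lemma exists_norm_eq_one_inner_eq_zero [FiniteDimensional ℝ E] (hE : 2 ≤ finrank ℝ E) (w : E) :
    ∃ u : E, ‖u‖ = 1 ∧ ⟪u, w⟫ = 0 := by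
  have hspan : finrank ℝ (ℝ ∙ w) ≤ 1 := by simpa using finrank_span_le_card ({w} : Set E)
  have hne : (ℝ ∙ w)ᗮ ≠ ⊥ := by
    intro h
    have := (ℝ ∙ w).finrank_add_finrank_orthogonal
    rw [h, finrank_bot] at this
    omega
  obtain ⟨x, hx, hx0⟩ := Submodule.exists_mem_ne_zero_of_ne_bot hne
  refine ⟨‖x‖⁻¹ • x, norm_smul_inv_norm hx0, ?_⟩
  rw [real_inner_smul_left, real_inner_comm,
    Submodule.mem_orthogonal_singleton_iff_inner_right.1 hx, mul_zero]

lemma exists_norm_eq_one_inner_eq_norm [Nontrivial E] (x : E) :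
    ∃ w : E, ‖w‖ = 1 ∧ ⟪x, w⟫ = ‖x‖ := by
  rcases eq_or_ne x 0 with rfl | hx
  · obtain ⟨w, hw⟩ := exists_ne (0 : E)
    exact ⟨‖w‖⁻¹ • w, norm_smul_inv_norm hw, by simp⟩
  · refine ⟨‖x‖⁻¹ • x, norm_smul_inv_norm hx, ?_⟩
    rw [real_inner_smul_right, real_inner_self_eq_norm_mul_norm]
    field_simp

end InnerProductSpace

lemma EuclideanSpace.real_inner_eq_dotProduct {ι : Type*} [Fintype ι] (x y : EuclideanSpace ℝ ι) :
    ⟪x, y⟫ = ofLp x ⬝ᵥ ofLp y := by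
  rw [EuclideanSpace.inner_eq_star_dotProduct, star_trivial, dotProduct_comm]

lemma ofLp_cross3 (u v : EuclideanSpace ℝ (Fin 3)) : ofLp (cross3 u v) = ofLp u ⨯₃ ofLp v := rfl

lemma inner_cross3_cross3 (x y u v : EuclideanSpace ℝ (Fin 3)) :
    ⟪cross3 x y, cross3 u v⟫ = ⟪x, u⟫ * ⟪y, v⟫ - ⟪x, v⟫ * ⟪y, u⟫ := by
  simp only [EuclideanSpace.real_inner_eq_dotProduct, ofLp_cross3, cross_dot_cross]

lemma inner_cross3_self (v w : EuclideanSpace ℝ (Fin 3)) : ⟪w, cross3 v w⟫ = 0 := by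
  rw [EuclideanSpace.real_inner_eq_dotProduct, ofLp_cross3, dot_cross_self]

lemma cross3_cross3 (u v w : EuclideanSpace ℝ (Fin 3)) :
    cross3 u (cross3 v w) = ⟪u, w⟫ • v - ⟪v, u⟫ • w := by
  apply (WithLp.equiv 2 (Fin 3 → ℝ)).injective
  simp [EuclideanSpace.real_inner_eq_dotProduct, ofLp_cross3, cross_cross_eq_smul_sub_smul']

lemma continuous_cross3 :
    Continuous fun p : EuclideanSpace ℝ (Fin 3) × EuclideanSpace ℝ (Fin 3) => cross3 p.1 p.2 := by
  simp only [cross3, WithLp.equiv_apply, WithLp.equiv_symm_apply, cross_apply]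
  fun_prop

lemma norm_cross3_of_orthonormal {u v : EuclideanSpace ℝ (Fin 3)} (hu : ‖u‖ = 1) (hv : ‖v‖ = 1)
    (huv : ⟪u, v⟫ = 0) : ‖cross3 u v‖ = 1 := by
  have : ‖cross3 u v‖ ^ 2 = 1 := by
    rw [← real_inner_self_eq_norm_sq, inner_cross3_cross3, real_inner_self_eq_norm_sq,
      real_inner_self_eq_norm_sq, hu, hv, huv, real_inner_comm, huv]
    norm_num
  exact (pow_eq_one_iff_of_nonneg (norm_nonneg _) two_ne_zero).1 this

lemma exists_orthonormal_cross3_eq {w : EuclideanSpace ℝ (Fin 3)} (hw : ‖w‖ = 1) :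
    ∃ u v : EuclideanSpace ℝ (Fin 3), ‖u‖ = 1 ∧ ‖v‖ = 1 ∧ ⟪u, v⟫ = 0 ∧ cross3 u v = w := by
  obtain ⟨u, hu, huw⟩ := exists_norm_eq_one_inner_eq_zero (by simp) w
  refine ⟨u, cross3 w u, hu, norm_cross3_of_orthonormal hw hu (by rwa [real_inner_comm]),
    inner_cross3_self w u, ?_⟩
  rw [cross3_cross3, real_inner_self_eq_norm_sq, hu, real_inner_comm, huw]
  simp

lemma intervalIntegral_inner_mul_sub_eq_inner_cross3 {a b : ℝ}
    {x y : ℝ → EuclideanSpace ℝ (Fin 3)} (hx : ContinuousOn x (uIcc a b))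
    (hy : ContinuousOn y (uIcc a b)) (u v : EuclideanSpace ℝ (Fin 3)) :
    ∫ t in a..b, (⟪x t, u⟫ * ⟪y t, v⟫ - ⟪x t, v⟫ * ⟪y t, u⟫) =
      ⟪∫ t in a..b, cross3 (x t) (y t), cross3 u v⟫ := by
  have hint : IntervalIntegrable (fun t => cross3 (x t) (y t)) MeasureTheory.volume a b :=
    (continuous_cross3.comp_continuousOn (hx.prodMk hy)).intervalIntegrable
  rw [real_inner_comm, ← innerSL_apply_apply ℝ, ← (innerSL ℝ _).intervalIntegral_comp_comm hint]
  refine intervalIntegral.integral_congr fun t _ => ?_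
  rw [innerSL_apply_apply, real_inner_comm _ (cross3 u v), inner_cross3_cross3]

theorem peano_max_projected_area_eq_bivector_magnitude_general
    (a b : ℝ) (hab : a < b) (γ γ' : ℝ → EuclideanSpace ℝ (Fin 3))
    (hderiv : ∀ t ∈ Set.Icc a b, HasDerivWithinAt γ (γ' t) (Set.Icc a b) t)
    (hcont : ContinuousOn γ' (Set.Icc a b))
    (O : EuclideanSpace ℝ (Fin 3))
    (N : EuclideanSpace ℝ (Fin 3))
    (hN : N = (1 / 2 : ℝ) • ∫ t in a..b, cross3 (γ t - O) (γ' t)) :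
    (∀ u v : EuclideanSpace ℝ (Fin 3), ‖u‖ = 1 → ‖v‖ = 1 → ⟪u, v⟫ = 0 →
        |(1 / 2 : ℝ) * ∫ t in a..b,
            (⟪γ t - O, u⟫ * ⟪γ' t, v⟫ - ⟪γ t - O, v⟫ * ⟪γ' t, u⟫)| ≤ ‖N‖) ∧
      (∃ u v : EuclideanSpace ℝ (Fin 3), ‖u‖ = 1 ∧ ‖v‖ = 1 ∧ ⟪u, v⟫ = 0 ∧
        (1 / 2 : ℝ) * ∫ t in a..b,
            (⟪γ t - O, u⟫ * ⟪γ' t, v⟫ - ⟪γ t - O, v⟫ * ⟪γ' t, u⟫) = ‖N‖) := by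
  rw [← uIcc_of_le hab.le] at hderiv hcont
  have hγ : ContinuousOn γ (uIcc a b) := fun t ht => (hderiv t ht).continuousWithinAt
  have harea : ∀ u v, (1 / 2 : ℝ) * ∫ t in a..b,
      (⟪γ t - O, u⟫ * ⟪γ' t, v⟫ - ⟪γ t - O, v⟫ * ⟪γ' t, u⟫) = ⟪N, cross3 u v⟫ := fun u v => by
    rw [intervalIntegral_inner_mul_sub_eq_inner_cross3 (x := fun t => γ t - O)
      (hγ.sub continuousOn_const) hcont, hN, real_inner_smul_left]
  refine ⟨fun u v hu hv huv => ?_, ?_⟩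
  · rw [harea]
    calc |⟪N, cross3 u v⟫|
      _ ≤ ‖N‖ * ‖cross3 u v‖ := abs_real_inner_le_norm N _
      _ = ‖N‖ := by rw [norm_cross3_of_orthonormal hu hv huv, mul_one]
  · obtain ⟨w, hw, hNw⟩ := exists_norm_eq_one_inner_eq_norm N
    obtain ⟨u, v, hu, hv, huv, rfl⟩ := exists_orthonormal_cross3_eq hw
    exact ⟨u, v, hu, hv, huv, by rw [harea, hNw]⟩

/-- Peano (1890): for a closed C¹ curve `γ` with bi-vector
`N = (1/2)∫ₐᵇ (γ − O) ×ᵥ γ′ dt`, the absolute signed area of the orthogonal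
projection of `γ` on the plane spanned by any orthonormal pair `u`, `v` is at
most `‖N‖`, and this value `‖N‖` is attained for some orthonormal pair; thus the
maximum projected area equals the magnitude of the bi-vector of the curve. -/
theorem peano_max_projected_area_eq_bivector_magnitude
    (a b : ℝ) (hab : a < b) (γ γ' : ℝ → EuclideanSpace ℝ (Fin 3))
    (hderiv : ∀ t ∈ Set.Icc a b, HasDerivWithinAt γ (γ' t) (Set.Icc a b) t)
    (hcont : ContinuousOn γ' (Set.Icc a b))
    (hclosed : γ a = γ b)
    (O : EuclideanSpace ℝ (Fin 3))
    (N : EuclideanSpace ℝ (Fin 3))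
    (hN : N = (1 / 2 : ℝ) • ∫ t in a..b, cross3 (γ t - O) (γ' t)) :
    (∀ u v : EuclideanSpace ℝ (Fin 3), ‖u‖ = 1 → ‖v‖ = 1 → ⟪u, v⟫ = 0 →
        |(1 / 2 : ℝ) * ∫ t in a..b,
            (⟪γ t - O, u⟫ * ⟪γ' t, v⟫ - ⟪γ t - O, v⟫ * ⟪γ' t, u⟫)| ≤ ‖N‖) ∧
      (∃ u v : EuclideanSpace ℝ (Fin 3), ‖u‖ = 1 ∧ ‖v‖ = 1 ∧ ⟪u, v⟫ = 0 ∧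
        (1 / 2 : ℝ) * ∫ t in a..b,
            (⟪γ t - O, u⟫ * ⟪γ' t, v⟫ - ⟪γ t - O, v⟫ * ⟪γ' t, u⟫) = ‖N‖) :=
  peano_max_projected_area_eq_bivector_magnitude_general a b hab γ γ' hderiv hcont O N hN
end
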